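/- arXiv:1611.07224 — 2 statements merged into one kernel-verified Lean document; each statement's English description precedes it below -/
import Mathlib

section
/- Let $N_t \geq 2$ and $B_f \geq 0$ be integers and $\rho > 0$ a real number. Let $X_1, \dots, X_{2^{B_f}}$ be independent identically distributed real random variables, each with cumulative distribution function $F(x) = 1 - (1-x)^{N_t - 1}$ for $x \in [0,1]$. Then $\rho N_t\, \mathbb{E}\big[\min_{1 \le i \le 2^{B_f}} X_i\big] \le \dfrac{\rho N_t}{N_t - 1}\,2^{-B_f}$. -/
/-!
If each `X i` has survival function `(1 - t)^(Nt - 1)` on `[0, 1]`, independence makes the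
survival function of their minimum the product `(1 - t)^((Nt - 1) 2^Bf)`: the minimum is
`Beta(1, (Nt - 1) 2^Bf)`. By the layer-cake formula its mean is `1 / ((Nt - 1) 2^Bf + 1)`,
which is at most `2^(-Bf) / (Nt - 1)`.
-/

open MeasureTheory ProbabilityTheory Set

lemma lt_ciInf_iff_of_finite {ι α : Type*} [Finite ι] [Nonempty ι]
    [ConditionallyCompleteLinearOrder α] {f : ι → α} {a : α} :
    a < ⨅ i, f i ↔ ∀ i, a < f i := by
  obtain ⟨j, hj⟩ := exists_eq_ciInf_of_finite (f := f)
  exact ⟨fun h i => h.trans_le (ciInf_le (finite_range f).bddBelow i), fun h => hj ▸ h j⟩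

section

variable {Ω : Type*} [MeasurableSpace Ω] {μ : Measure Ω}

lemma ProbabilityTheory.iIndepFun.measure_lt_iInf {ι : Type*} [Fintype ι] [Nonempty ι]
    {X : ι → Ω → ℝ} (hX : iIndepFun X μ) (t : ℝ) :
    μ {ω | t < ⨅ i, X i ω} = ∏ i, μ {ω | t < X i ω} := by
  have hset : {ω | t < ⨅ i, X i ω} = ⋂ i, X i ⁻¹' Ioi t := by
    ext ω
    simp [lt_ciInf_iff_of_finite]
  rw [hset, hX.meas_iInter fun i => ⟨Ioi t, measurableSet_Ioi, rfl⟩]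
  rfl

variable [IsProbabilityMeasure μ]

lemma measure_lt_eq_of_measure_le {X : Ω → ℝ} (hX : Measurable X) {x p : ℝ}
    (hp : p ≤ 1) (h : μ {ω | X ω ≤ x} = ENNReal.ofReal (1 - p)) :
    μ {ω | x < X ω} = ENNReal.ofReal p := by
  have hcompl : {ω | x < X ω} = {ω | X ω ≤ x}ᶜ := by
    ext
    simp
  rw [hcompl, prob_compl_eq_one_sub (measurableSet_le hX measurable_const), h,
    ← ENNReal.ofReal_one, ← ENNReal.ofReal_sub _ (sub_nonneg.2 hp), sub_sub_cancel]

end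

/-- The survival function `t ↦ P(Y > t)` of `Y ∼ Beta(1, k)`. -/
def betaOneTail (k : ℕ) (t : ℝ) : ℝ := (1 - min (max t 0) 1) ^ k

lemma betaOneTail_nonneg (k : ℕ) (t : ℝ) : 0 ≤ betaOneTail k t :=
  pow_nonneg (sub_nonneg.2 (min_le_right _ _)) k

lemma betaOneTail_le_one (k : ℕ) (t : ℝ) : betaOneTail k t ≤ 1 :=
  pow_le_one₀ (sub_nonneg.2 (min_le_right _ _)) (by simp)

lemma integral_Ioi_betaOneTail {k : ℕ} (hk : k ≠ 0) :
    ∫ t in Ioi (0 : ℝ), betaOneTail k t = 1 / (k + 1) := by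
  have hcongr : EqOn (betaOneTail k) ((Iic 1).indicator fun t => (1 - t) ^ k) (Ioi 0) := by
    intro t ht
    by_cases h1 : t ≤ 1
    · simp [betaOneTail, indicator_of_mem (show t ∈ Iic 1 from h1),
        max_eq_left (mem_Ioi.1 ht).le, min_eq_left h1]
    · simp [betaOneTail, indicator_of_notMem (show t ∉ Iic 1 from h1),
        min_eq_right (le_max_of_le_left (not_le.1 h1).le), hk]
  rw [setIntegral_congr_fun measurableSet_Ioi hcongr, integral_indicator measurableSet_Iic,
    Measure.restrict_restrict measurableSet_Iic, Iic_inter_Ioi,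
    ← intervalIntegral.integral_of_le zero_le_one,
    intervalIntegral.integral_comp_sub_left (fun x => x ^ k) 1]
  norm_num [integral_pow]

lemma integral_eq_of_measure_lt_eq_betaOneTail {Ω : Type*} [MeasurableSpace Ω] {μ : Measure Ω}
    [IsProbabilityMeasure μ] {Z : Ω → ℝ} (hZ : Measurable Z) {k : ℕ} (hk : k ≠ 0)
    (hZtail : ∀ t, μ {ω | t < Z ω} = ENNReal.ofReal (betaOneTail k t)) :
    ∫ ω, Z ω ∂μ = 1 / (k + 1) := by
  have hpos : ∀ᵐ ω ∂μ, 0 < Z ω := by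
    rw [ae_iff, ← compl_ofPred, prob_compl_eq_zero_iff (measurableSet_lt measurable_const hZ),
      hZtail]
    simp [betaOneTail]
  have hle : ∀ᵐ ω ∂μ, Z ω ≤ 1 := by
    simp only [ae_iff, not_le]
    rw [hZtail]
    simp [betaOneTail, hk]
  have hint : Integrable Z μ := Integrable.of_mem_Icc 0 1 hZ.aemeasurable
    (by filter_upwards [hpos, hle] with ω h0 h1 using ⟨h0.le, h1⟩)
  rw [hint.integral_eq_integral_meas_lt (hpos.mono fun ω h => h.le),
    ← integral_Ioi_betaOneTail hk]
  congr 1 with t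
  rw [measureReal_def, hZtail, ENNReal.toReal_ofReal (betaOneTail_nonneg k t)]

/-- Corollary 1 of the paper (interference upper bound under perfect CSI exchange):
`ρ N_t · 𝔼[min of 2^{B_f} i.i.d. Beta(1, N_t-1) variables] ≤ ρ N_t/(N_t-1) · 2^{-B_f}`. -/
theorem stmt_4
    {Ω : Type*} [MeasurableSpace Ω] (μ : Measure Ω) [IsProbabilityMeasure μ]
    (Nt Bf : ℕ) (hNt : 2 ≤ Nt) (ρ : ℝ) (hρ : 0 < ρ)
    (X : Fin (2 ^ Bf) → Ω → ℝ)
    (hmeas : ∀ i, Measurable (X i))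
    (hindep : iIndepFun X μ)
    (hcdf : ∀ i : Fin (2 ^ Bf), ∀ x : ℝ,
      μ {ω | X i ω ≤ x} = ENNReal.ofReal (1 - (1 - min (max x 0) 1) ^ (Nt - 1))) :
    ρ * Nt * ∫ ω, (⨅ i, X i ω) ∂μ ≤ ρ * Nt / ((Nt : ℝ) - 1) * (2 : ℝ) ^ (-(Bf : ℝ)) := by
  have hmin_tail (t : ℝ) :
      μ {ω | t < ⨅ i, X i ω} = ENNReal.ofReal (betaOneTail ((Nt - 1) * 2 ^ Bf) t) := by
    have hX_tail (i) : μ {ω | t < X i ω} = ENNReal.ofReal (betaOneTail (Nt - 1) t) :=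
      measure_lt_eq_of_measure_le (hmeas i) (betaOneTail_le_one _ _) (hcdf i t)
    rw [hindep.measure_lt_iInf, Finset.prod_congr rfl fun i _ => hX_tail i, Finset.prod_const,
      Finset.card_univ, Fintype.card_fin, ← ENNReal.ofReal_pow (betaOneTail_nonneg _ _),
      betaOneTail, betaOneTail, pow_mul]
  have hNt' : (0 : ℝ) < Nt - 1 := by
    have : (2 : ℝ) ≤ Nt := by exact_mod_cast hNt
    linarith
  rw [integral_eq_of_measure_lt_eq_betaOneTail (Measurable.iInf hmeas)
      (mul_ne_zero (by omega) (pow_ne_zero _ two_ne_zero)) hmin_tail,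
    Real.rpow_neg zero_le_two, Real.rpow_natCast]
  push_cast [Nat.cast_sub (by omega : 1 ≤ Nt)]
  calc ρ * Nt * (1 / ((Nt - 1) * 2 ^ Bf + 1)) ≤ ρ * Nt * (1 / ((Nt - 1) * 2 ^ Bf)) := by
        gcongr
        linarith
    _ = ρ * Nt / (Nt - 1) * (2 ^ Bf)⁻¹ := by field_simp
end

section
/- Define $\Phi(K) = \Gamma\!\big(\tfrac{K}{K-1}\big)\,\Gamma(K)^{-\frac{1}{K-1}}$ for integers $K \geq 2$, where $\Gamma$ is the Gamma function. Then (a) $\Phi(K) \le 1$ for every integer $K \geq 2$, and (b) $\Phi$ is decreasing: $\Phi(K+1) \le \Phi(K)$ for every integer $K \geq 2$. -/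
/-!
Write `Φ(n+1) = exp ((S(1/n) - log n!) / n)`, where `S(x) = log Γ(1+x) / x` is the slope of the
convex function `log ∘ Γ` between `1` and `1 + x`. Convexity makes `S` nondecreasing, so
`S(1/n) ≤ S(1) = 0`, which gives `Φ ≤ 1`, and `S(1/n) ≥ S(-1/2) = -log π` (as `Γ(1/2) = √π`).
Comparing consecutive exponents, monotonicity of `Φ` then reduces to `S(1/(n+1)) ≤ S(1/n)`
together with the elementary bound `π n! ≤ (n+1)^n` for `n ≥ 2`.
-/

/-- The coefficient `Φ(K) = Γ(K/(K-1)) Γ(K)^{-1/(K-1)}` of Theorem 3. -/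
noncomputable def Phi (K : ℕ) : ℝ :=
  Real.Gamma ((K : ℝ) / ((K : ℝ) - 1)) * Real.Gamma (K : ℝ) ^ (-(1 / ((K : ℝ) - 1)))

open Real
open scoped Nat

noncomputable def gammaSlope (x : ℝ) : ℝ := log (Gamma (1 + x)) / x

lemma gammaSlope_le_gammaSlope {x y : ℝ} (hx : -1 < x) (hx0 : x ≠ 0) (hy0 : y ≠ 0) (hxy : x ≤ y) :
    gammaSlope x ≤ gammaSlope y := by
  have h := convexOn_log_Gamma.secant_mono (a := 1) (x := 1 + x) (y := 1 + y)
    (Set.mem_Ioi.2 one_pos) (Set.mem_Ioi.2 (by linarith)) (Set.mem_Ioi.2 (by linarith))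
    (by simpa using hx0) (by simpa using hy0) (by linarith)
  simpa [gammaSlope] using h

lemma gammaSlope_one : gammaSlope 1 = 0 := by
  norm_num [gammaSlope, Gamma_two]

lemma gammaSlope_neg_half : gammaSlope (-1 / 2) = -log π := by
  have h : (1 : ℝ) + -1 / 2 = 1 / 2 := by norm_num
  rw [gammaSlope, h, Gamma_one_half_eq, log_sqrt pi_nonneg]
  ring

lemma pi_mul_factorial_le_pow (n : ℕ) (hn : 2 ≤ n) : π * n ! ≤ ((n + 1 : ℕ) : ℝ) ^ n := by
  induction n, hn using Nat.le_induction with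
  | base => norm_num [Nat.factorial]; linarith [pi_le_four]
  | succ n _ ih =>
    calc π * (n + 1)! = (n + 1 : ℝ) * (π * n !) := by push_cast [Nat.factorial_succ]; ring
      _ ≤ (n + 1 : ℝ) * (n + 1 : ℝ) ^ n := by gcongr; exact_mod_cast ih
      _ ≤ ((n + 1 + 1 : ℕ) : ℝ) ^ (n + 1) := by
        rw [← pow_succ']; gcongr; push_cast; linarith

lemma Phi_succ_eq (n : ℕ) (hn : n ≠ 0) :
    Phi (n + 1) = exp ((gammaSlope (n : ℝ)⁻¹ - log n !) / n) := by
  have hn' : (n : ℝ) ≠ 0 := Nat.cast_ne_zero.2 hn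
  have hΓ : 0 < Gamma (1 + (n : ℝ)⁻¹) := Gamma_pos_of_pos (by positivity)
  have harg : ((n + 1 : ℕ) : ℝ) / ((n + 1 : ℕ) - 1) = 1 + (n : ℝ)⁻¹ := by
    push_cast; rw [add_sub_cancel_right, add_div, div_self hn', one_div]
  have hfac : Gamma ((n + 1 : ℕ) : ℝ) = n ! := by
    push_cast; exact Gamma_nat_eq_factorial n
  rw [Phi, harg, hfac, rpow_def_of_pos (by positivity), ← exp_log hΓ, ← exp_add, gammaSlope,
    div_inv_eq_mul, sub_div, mul_div_cancel_right₀ _ hn']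
  push_cast
  rw [add_sub_cancel_right]
  congr 1
  ring

lemma Phi_succ_le_one (n : ℕ) (hn : n ≠ 0) : Phi (n + 1) ≤ 1 := by
  have hn' : (0 : ℝ) < n := Nat.cast_pos.2 (Nat.pos_of_ne_zero hn)
  have hslope : gammaSlope (n : ℝ)⁻¹ ≤ 0 :=
    gammaSlope_one ▸ gammaSlope_le_gammaSlope (by linarith [inv_pos.2 hn'])
      (inv_ne_zero hn'.ne') one_ne_zero
      (inv_le_one_of_one_le₀ (Nat.one_le_cast.2 (Nat.one_le_iff_ne_zero.2 hn)))
  have hlog : 0 ≤ log n ! := log_nonneg (by exact_mod_cast n.factorial_pos)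
  rw [Phi_succ_eq n hn, exp_le_one_iff]
  exact div_nonpos_of_nonpos_of_nonneg (by linarith) hn'.le

lemma Phi_two : Phi 2 = 1 := by
  norm_num [Phi, Gamma_two]

lemma Phi_succ_succ_le (n : ℕ) (hn : 2 ≤ n) : Phi (n + 2) ≤ Phi (n + 1) := by
  have hn' : (2 : ℝ) ≤ n := by exact_mod_cast hn
  have hmono : gammaSlope ((n + 1 : ℕ) : ℝ)⁻¹ ≤ gammaSlope (n : ℝ)⁻¹ :=
    gammaSlope_le_gammaSlope (by push_cast; linarith [inv_pos.2 (by linarith : (0 : ℝ) < n + 1)])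
      (by positivity) (by positivity) (by push_cast; gcongr; linarith)
  have hpi : -log π ≤ gammaSlope (n : ℝ)⁻¹ :=
    gammaSlope_neg_half ▸ gammaSlope_le_gammaSlope (by norm_num) (by norm_num) (by positivity)
      (by linarith [inv_pos.2 (by linarith : (0 : ℝ) < n)])
  have hfac : log π + log n ! ≤ n * log (n + 1) := by
    rw [← log_mul pi_ne_zero (by positivity), ← log_pow]
    exact log_le_log (by positivity) (by exact_mod_cast pi_mul_factorial_le_pow n hn)
  have hlog_succ : log (n + 1)! = log (n + 1) + log n ! := by
    push_cast [Nat.factorial_succ]; exact log_mul (by positivity) (by positivity)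
  rw [show n + 2 = (n + 1) + 1 by ring, Phi_succ_eq _ (by omega), Phi_succ_eq _ (by omega),
    exp_le_exp, hlog_succ, div_le_div_iff₀ (by positivity) (by positivity)]
  push_cast at hmono ⊢
  nlinarith [mul_le_mul_of_nonneg_left hmono (by positivity : (0 : ℝ) ≤ n)]

/-- `Φ(K) ≤ 1` for every integer `K ≥ 2`, and `Φ` is decreasing in `K`. -/
theorem stmt_10 :
    ∀ K : ℕ, 2 ≤ K → Phi K ≤ 1 ∧ Phi (K + 1) ≤ Phi K := by
  intro K hK
  obtain ⟨n, rfl⟩ : ∃ n, K = n + 1 := ⟨K - 1, by omega⟩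
  refine ⟨Phi_succ_le_one n (by omega), ?_⟩
  rcases Nat.lt_or_ge n 2 with hn | hn
  · obtain rfl : n = 1 := by omega
    simpa [Phi_two] using Phi_succ_le_one 2 two_ne_zero
  · exact Phi_succ_succ_le n hn
end
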